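/- arXiv:2604.16802 — 3 statements merged into one kernel-verified Lean document; each statement's English description precedes it below -/
import Mathlib

section
/- Under the guardrail Λ_0(P) < Sμ, aggregate demand satisfies Λ*_{P,S}(Q) ≤ Λ_max(P) := Σ_k ρ_k · max{w_k/P − 1, 0} for all Q ≥ 0, and the interval [0, Q^drop(P,S) + Δ·Λ_max(P)] is forward invariant for the recursion Q_{t+1} = max{Q_t + Δ(Λ*_{P,S}(Q_t) − Sμ), 0}; moreover every trajectory enters this interval in finite time. -/
open Finset

/-- Under the guardrail `Λ₀(P) < Sμ`: the aggregate demand is bounded by `Λ_max(P)`, the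
interval `[0, Q^drop + Δ·Λ_max(P)]` is forward invariant, and every trajectory enters it
in finite time. -/
theorem stmt_8 (K : ℕ) (ρ w δ : Fin K → ℝ)
    (hρ : ∀ k, 0 ≤ ρ k) (hw : ∀ k, 0 < w k) (hδ : ∀ k, 0 ≤ δ k)
    (P S μ ε Δ : ℝ) (hP : 0 < P) (hS : 0 ≤ S) (hμ : 0 < μ) (hε : 0 < ε) (hΔ : 0 < Δ)
    (hne : (Finset.univ.filter (fun k => 0 < δ k)).Nonempty)
    (Λstar : ℝ → ℝ) (Λ0 Λmax Qdrop : ℝ)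
    (hΛ : ∀ Q, Λstar Q = ∑ k, ρ k * max (w k / (P + δ k * (Q / (S * μ + ε))) - 1) 0)
    (hΛ0 : Λ0 = ∑ k, if δ k = 0 then ρ k * max (w k / P - 1) 0 else 0)
    (hΛmax : Λmax = ∑ k, ρ k * max (w k / P - 1) 0)
    (hQdrop : Qdrop = (Finset.univ.filter (fun k => 0 < δ k)).sup' hne
      (fun k => max ((S * μ + ε) * (w k - P) / δ k) 0))
    (hguard : Λ0 < S * μ) :
    (∀ Q : ℝ, 0 ≤ Q → Λstar Q ≤ Λmax) ∧
    (∀ Q : ℝ, Q ∈ Set.Icc 0 (Qdrop + Δ * Λmax) →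
      max (Q + Δ * (Λstar Q - S * μ)) 0 ∈ Set.Icc 0 (Qdrop + Δ * Λmax)) ∧
    (∀ Q : ℕ → ℝ, 0 ≤ Q 0 →
      (∀ t, Q (t + 1) = max (Q t + Δ * (Λstar (Q t) - S * μ)) 0) →
      ∃ T : ℕ, Q T ∈ Set.Icc 0 (Qdrop + Δ * Λmax)) := by
  have hSμε : 0 < S * μ + ε := add_pos_of_nonneg_of_pos (mul_nonneg hS hμ.le) hε
  have hSμ : 0 ≤ S * μ := mul_nonneg hS hμ.le
  have hΛmax0 : 0 ≤ Λmax := by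
    rw [hΛmax]
    exact Finset.sum_nonneg fun k _ => mul_nonneg (hρ k) (le_max_right _ _)
  have hQd0 : 0 ≤ Qdrop := by
    obtain ⟨k, hk⟩ := hne
    rw [hQdrop]
    exact le_trans (le_max_right _ 0) (Finset.le_sup' (fun k => max ((S * μ + ε) * (w k - P) / δ k) 0) hk)
  -- Part 1
  have hbound : ∀ Q : ℝ, 0 ≤ Q → Λstar Q ≤ Λmax := by
    intro Q hQ
    rw [hΛ, hΛmax]
    apply Finset.sum_le_sum
    intro k _
    apply mul_le_mul_of_nonneg_left _ (hρ k)
    apply max_le_max _ le_rfl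
    apply sub_le_sub_right
    gcongr
    · exact (hw k).le
    · exact le_add_of_nonneg_right (mul_nonneg (hδ k) (div_nonneg hQ hSμε.le))
  -- Λstar Q ≤ Λ0 for Q ≥ Qdrop
  have hdrop : ∀ Q : ℝ, Qdrop ≤ Q → Λstar Q ≤ Λ0 := by
    intro Q hQ
    have hQ0 : 0 ≤ Q := le_trans hQd0 hQ
    rw [hΛ, hΛ0]
    apply Finset.sum_le_sum
    intro k _
    by_cases hk : δ k = 0
    · simp [hk]
    · have hkpos : 0 < δ k := (hδ k).lt_of_ne (Ne.symm hk)
      have hmem : k ∈ Finset.univ.filter (fun k => 0 < δ k) := by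
        simp [hkpos]
      have h1 : (S * μ + ε) * (w k - P) / δ k ≤ Q := by
        calc (S * μ + ε) * (w k - P) / δ k
            ≤ max ((S * μ + ε) * (w k - P) / δ k) 0 := le_max_left _ _
          _ ≤ Qdrop := by rw [hQdrop]; exact Finset.le_sup' (fun k => max ((S * μ + ε) * (w k - P) / δ k) 0) hmem
          _ ≤ Q := hQ
      have h2 : (S * μ + ε) * (w k - P) ≤ δ k * Q := by
        rw [div_le_iff₀ hkpos] at h1; linarith
      have h3 : w k - P ≤ δ k * (Q / (S * μ + ε)) := by
        rw [← mul_div_assoc, le_div_iff₀ hSμε]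
        nlinarith
      have hden : 0 < P + δ k * (Q / (S * μ + ε)) := by
        have : 0 ≤ δ k * (Q / (S * μ + ε)) :=
          mul_nonneg (hδ k) (div_nonneg hQ0 hSμε.le)
        linarith
      have h4 : w k / (P + δ k * (Q / (S * μ + ε))) ≤ 1 := by
        rw [div_le_one hden]; linarith
      have h5 : max (w k / (P + δ k * (Q / (S * μ + ε))) - 1) 0 = 0 :=
        max_eq_right (by linarith)
      simp [hk, h5]
  have hguard' : ∀ Q : ℝ, Qdrop ≤ Q → Λstar Q < S * μ :=
    fun Q hQ => lt_of_le_of_lt (hdrop Q hQ) hguard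
  set B := Qdrop + Δ * Λmax with hB
  have hB0 : 0 ≤ B := add_nonneg hQd0 (mul_nonneg hΔ.le hΛmax0)
  refine ⟨hbound, ?_, ?_⟩
  · -- invariance
    rintro Q ⟨hQ0, hQB⟩
    refine ⟨le_max_right _ _, max_le ?_ hB0⟩
    by_cases hcase : Q ≤ Qdrop
    · have h1 : Λstar Q ≤ Λmax := hbound Q hQ0
      have h2 : Δ * (Λstar Q - S * μ) ≤ Δ * Λmax := by nlinarith
      linarith
    · have h1 : Λstar Q < S * μ := hguard' Q (le_of_not_ge hcase)
      have h2 : Δ * (Λstar Q - S * μ) ≤ 0 := by nlinarith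
      linarith
  · -- finite time
    intro Q hQ0 hrec
    by_contra h
    push_neg at h
    have hQt0 : ∀ t, 0 ≤ Q t := by
      intro t
      cases t with
      | zero => exact hQ0
      | succ n => rw [hrec n]; exact le_max_right _ _
    have hQtB : ∀ t, B < Q t := by
      intro t
      by_contra hle
      exact h t ⟨hQt0 t, le_of_not_gt hle⟩
    set c := Δ * (S * μ - Λ0) with hc
    have hcpos : 0 < c := mul_pos hΔ (by linarith)
    have hstep : ∀ t, Q (t + 1) ≤ Q t - c := by
      intro t
      have hQd : Qdrop ≤ Q t := by
        have := hQtB t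
        have : B < Q t := this
        have hqb : Qdrop ≤ B := le_add_of_nonneg_right (mul_nonneg hΔ.le hΛmax0)
        linarith
      have hls : Λstar (Q t) ≤ Λ0 := hdrop _ hQd
      have harg : Q t + Δ * (Λstar (Q t) - S * μ) ≤ Q t - c := by nlinarith
      have hmax : Q (t + 1) ≤ max (Q t - c) 0 := by
        rw [hrec t]; exact max_le_max harg le_rfl
      rcases max_choice (Q t - c) 0 with hm | hm
      · rw [hm] at hmax; exact hmax
      · rw [hm] at hmax
        have := hQtB (t + 1)
        linarith
    have hsum : ∀ t : ℕ, Q t ≤ Q 0 - t * c := by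
      intro t
      induction t with
      | zero => simp
      | succ n ih =>
        have := hstep n
        push_cast
        linarith
    obtain ⟨n, hn⟩ := exists_nat_gt (Q 0 / c)
    have hnc : Q 0 < n * c := by
      rw [div_lt_iff₀ hcpos] at hn; linarith
    have := hsum n
    have := hQt0 n
    linarith
end

section
/- Under the conditions that D(Q) = Q/(Sμ+ε) (continuous, strictly increasing, unbounded, D(0)=0), the guardrail Λ_0(P) < Sμ holds, and Δ·L_Λ(P,S) ≤ 1 where L_Λ(P,S) is a Lipschitz constant of Λ*_{P,S} on the forward-invariant region, the trajectory of Q_{t+1} = max{Q_t + Δ(Λ*_{P,S}(Q_t) − Sμ), 0} converges to the unique fixed point Q* for every initial Q_0 ≥ 0. -/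
open Finset Filter

set_option maxHeartbeats 1000000

/-- Theorem 1 (global convergence to the operating point): under the guardrail
`Λ₀(P) < Sμ` and the step-size condition `Δ·L_Λ ≤ 1` for a Lipschitz constant `L_Λ` of
`Λ*` on the forward-invariant region, every trajectory of the fixed-pair backlog
recursion converges to the unique fixed point `Q*`. -/
theorem stmt_12 (K : ℕ) (ρ w δ : Fin K → ℝ)
    (hρ : ∀ k, 0 ≤ ρ k) (hρsum : ∑ k, ρ k = 1)
    (hw : ∀ k, 0 < w k) (hδ : ∀ k, 0 ≤ δ k)
    (P S μ ε Δ : ℝ) (hP : 0 < P) (hS : 0 ≤ S) (hμ : 0 < μ) (hε : 0 < ε) (hΔ : 0 < Δ)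
    (hne : (Finset.univ.filter (fun k => 0 < δ k)).Nonempty)
    (Λstar : ℝ → ℝ) (Λ0 Λmax Qdrop L : ℝ)
    (hΛ : ∀ Q, Λstar Q = ∑ k, ρ k * max (w k / (P + δ k * (Q / (S * μ + ε))) - 1) 0)
    (hΛ0 : Λ0 = ∑ k, if δ k = 0 then ρ k * max (w k / P - 1) 0 else 0)
    (hΛmax : Λmax = ∑ k, ρ k * max (w k / P - 1) 0)
    (hQdrop : Qdrop = (Finset.univ.filter (fun k => 0 < δ k)).sup' hne
      (fun k => max ((S * μ + ε) * (w k - P) / δ k) 0))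
    (hguard : Λ0 < S * μ)
    (hLip : ∀ Q₁ Q₂ : ℝ, Q₁ ∈ Set.Icc 0 (Qdrop + Δ * Λmax) →
      Q₂ ∈ Set.Icc 0 (Qdrop + Δ * Λmax) → |Λstar Q₁ - Λstar Q₂| ≤ L * |Q₁ - Q₂|)
    (hstep : Δ * L ≤ 1) :
    ∃ Qstar : ℝ, 0 ≤ Qstar ∧
      max (Qstar + Δ * (Λstar Qstar - S * μ)) 0 = Qstar ∧
      (∀ q : ℝ, 0 ≤ q → max (q + Δ * (Λstar q - S * μ)) 0 = q → q = Qstar) ∧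
      (∀ Q : ℕ → ℝ, 0 ≤ Q 0 →
        (∀ t, Q (t + 1) = max (Q t + Δ * (Λstar (Q t) - S * μ)) 0) →
        Tendsto Q atTop (nhds Qstar)) := by
  have hc : (0:ℝ) < S * μ + ε := by positivity
  set c : ℝ := S * μ + ε with hcdef
  set B : ℝ := Qdrop + Δ * Λmax with hBdef
  set T : ℝ → ℝ := fun q => max (q + Δ * (Λstar q - S * μ)) 0 with hT
  -- denominators are positive
  have hden : ∀ (k : Fin K) (q : ℝ), 0 ≤ q → 0 < P + δ k * (q / c) := by
    intro k q hq
    have h1 : 0 ≤ δ k * (q / c) := by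
      have := hδ k; positivity
    linarith
  -- Λstar is nonincreasing on [0,∞)
  have hmono : ∀ q1 q2 : ℝ, 0 ≤ q1 → q1 ≤ q2 → Λstar q2 ≤ Λstar q1 := by
    intro q1 q2 h1 h12
    rw [hΛ, hΛ]
    apply Finset.sum_le_sum
    intro k _
    have hd1 := hden k q1 h1
    have hd2 := hden k q2 (h1.trans h12)
    have hdle : P + δ k * (q1 / c) ≤ P + δ k * (q2 / c) := by
      have h2 : q1 / c ≤ q2 / c := by gcongr
      have h3 := hδ k
      nlinarith
    apply mul_le_mul_of_nonneg_left _ (hρ k)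
    apply max_le_max _ le_rfl
    apply sub_le_sub_right
    exact div_le_div_of_nonneg_left (hw k).le hd1 hdle
  -- Λstar at 0 equals Λmax
  have hΛmaxeq : Λstar 0 = Λmax := by
    rw [hΛ, hΛmax]
    apply Finset.sum_congr rfl
    intro k _
    norm_num
  have hΛleMax : ∀ q : ℝ, 0 ≤ q → Λstar q ≤ Λmax := by
    intro q hq
    rw [← hΛmaxeq]
    exact hmono 0 q le_rfl hq
  have hΛmax0 : 0 ≤ Λmax := by
    rw [hΛmax]
    apply Finset.sum_nonneg
    intro k _
    exact mul_nonneg (hρ k) (le_max_right _ _)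
  have hQdrop0 : 0 ≤ Qdrop := by
    obtain ⟨k0, hk0⟩ := hne
    rw [hQdrop]
    exact le_trans (le_max_right (c * (w k0 - P) / δ k0) 0) (Finset.le_sup' (fun k => max (c * (w k - P) / δ k) 0) hk0)
  have hB0 : (0:ℝ) ≤ B := by
    have : 0 ≤ Δ * Λmax := by positivity
    rw [hBdef]; linarith
  have hQdB : Qdrop ≤ B := by
    have : 0 ≤ Δ * Λmax := by positivity
    rw [hBdef]; linarith
  -- for q ≥ Qdrop, Λstar q = Λ0
  have hΛdrop : ∀ q : ℝ, Qdrop ≤ q → Λstar q = Λ0 := by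
    intro q hq
    have hq0 : 0 ≤ q := hQdrop0.trans hq
    rw [hΛ, hΛ0]
    apply Finset.sum_congr rfl
    intro k _
    by_cases hk : δ k = 0
    · simp [hk]
    · have hkpos : 0 < δ k := lt_of_le_of_ne (hδ k) (Ne.symm hk)
      simp only [hk, if_false]
      have hmem : k ∈ Finset.univ.filter (fun k => 0 < δ k) := by
        simp [hkpos]
      have hle : max (c * (w k - P) / δ k) 0 ≤ Qdrop := by
        rw [hQdrop]
        exact Finset.le_sup' (fun k => max (c * (w k - P) / δ k) 0) hmem
      have h1 : c * (w k - P) / δ k ≤ q :=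
        le_trans (le_trans (le_max_left _ _) hle) hq
      rw [div_le_iff₀ hkpos] at h1
      have h5 : δ k * (q / c) = q * δ k / c := by ring
      have h4 : w k - P ≤ q * δ k / c := by
        rw [le_div_iff₀ hc]; nlinarith
      have h2 : w k ≤ P + δ k * (q / c) := by linarith [h4, h5.ge, h5.le]
      have h3 : w k / (P + δ k * (q / c)) ≤ 1 := (div_le_one (hden k q hq0)).mpr h2
      have hm : max (w k / (P + δ k * (q / c)) - 1) 0 = 0 := max_eq_right (by linarith)
      rw [hm, mul_zero]
  -- Λ0 is a lower bound for Λstar on [0,∞)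
  have hΛ0le : ∀ q : ℝ, 0 ≤ q → Λ0 ≤ Λstar q := by
    intro q hq
    rw [hΛ, hΛ0]
    apply Finset.sum_le_sum
    intro k _
    by_cases hk : δ k = 0
    · simp [hk]
    · simp only [hk, if_false]
      exact mul_nonneg (hρ k) (le_max_right _ _)
  -- strict decrease where Λstar exceeds Λ0
  have hstrict : ∀ q1 q2 : ℝ, 0 ≤ q1 → q1 < q2 → Λ0 < Λstar q2 → Λstar q2 < Λstar q1 := by
    intro q1 q2 h1 h12 hgt
    have h2 : (0:ℝ) ≤ q2 := le_trans h1 h12.le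
    -- find a positive term with δ k > 0
    have hex : ∃ k : Fin K, δ k ≠ 0 ∧ 0 < ρ k * max (w k / (P + δ k * (q2 / c)) - 1) 0 := by
      by_contra hcon
      push_neg at hcon
      have : Λstar q2 = Λ0 := by
        rw [hΛ, hΛ0]
        apply Finset.sum_congr rfl
        intro k _
        by_cases hk : δ k = 0
        · simp [hk]
        · simp only [hk, if_false]
          have h := hcon k hk
          have hnn : 0 ≤ ρ k * max (w k / (P + δ k * (q2 / c)) - 1) 0 :=
            mul_nonneg (hρ k) (le_max_right _ _)
          linarith
      linarith
    obtain ⟨k0, hk0ne, hk0pos⟩ := hex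
    rw [hΛ, hΛ]
    apply Finset.sum_lt_sum
    · intro k _
      have hd1 := hden k q1 h1
      have hd2 := hden k q2 h2
      have hdle : P + δ k * (q1 / c) ≤ P + δ k * (q2 / c) := by
        have hq : q1 / c ≤ q2 / c := by gcongr
        have h3 := hδ k
        nlinarith
      apply mul_le_mul_of_nonneg_left _ (hρ k)
      apply max_le_max _ le_rfl
      apply sub_le_sub_right
      exact div_le_div_of_nonneg_left (hw k).le hd1 hdle
    · refine ⟨k0, Finset.mem_univ k0, ?_⟩
      have hδpos : 0 < δ k0 := lt_of_le_of_ne (hδ k0) (Ne.symm hk0ne)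
      have hd1 := hden k0 q1 h1
      have hd2 := hden k0 q2 h2
      have hρpos : 0 < ρ k0 := by
        rcases lt_or_eq_of_le (hρ k0) with h | h
        · exact h
        · exfalso; rw [← h] at hk0pos; simp at hk0pos
      have hmaxpos : 0 < max (w k0 / (P + δ k0 * (q2 / c)) - 1) 0 := by
        by_contra hcon
        push_neg at hcon
        have : max (w k0 / (P + δ k0 * (q2 / c)) - 1) 0 = 0 :=
          le_antisymm hcon (le_max_right _ _)
        rw [this, mul_zero] at hk0pos
        exact lt_irrefl 0 hk0pos
      have hmval : max (w k0 / (P + δ k0 * (q2 / c)) - 1) 0 = w k0 / (P + δ k0 * (q2 / c)) - 1 := by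
        rcases max_cases (w k0 / (P + δ k0 * (q2 / c)) - 1) 0 with ⟨h, _⟩ | ⟨h, _⟩
        · exact h
        · rw [h] at hmaxpos; exact absurd hmaxpos (lt_irrefl 0)
      have hdlt : P + δ k0 * (q1 / c) < P + δ k0 * (q2 / c) := by
        have hq : q1 / c < q2 / c := by gcongr
        nlinarith
      have hdivlt : w k0 / (P + δ k0 * (q2 / c)) < w k0 / (P + δ k0 * (q1 / c)) :=
        div_lt_div_of_pos_left (hw k0) hd1 hdlt
      have : max (w k0 / (P + δ k0 * (q2 / c)) - 1) 0 <
          max (w k0 / (P + δ k0 * (q1 / c)) - 1) 0 := by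
        rw [hmval]
        calc w k0 / (P + δ k0 * (q2 / c)) - 1
            < w k0 / (P + δ k0 * (q1 / c)) - 1 := by linarith
          _ ≤ max (w k0 / (P + δ k0 * (q1 / c)) - 1) 0 := le_max_left _ _
      exact mul_lt_mul_of_pos_left this hρpos
  -- Λstar is continuous on [0, B]
  have hΛcont : ContinuousOn Λstar (Set.Icc 0 B) := by
    have hfun : Λstar = fun q => ∑ k, ρ k * max (w k / (P + δ k * (q / c)) - 1) 0 :=
      funext hΛ
    rw [hfun]
    apply continuousOn_finset_sum
    intro k _
    apply ContinuousOn.mul continuousOn_const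
    show ContinuousOn (fun q => (w k / (P + δ k * (q / c)) - 1) ⊔ 0) _
    apply ContinuousOn.sup _ continuousOn_const
    apply ContinuousOn.sub _ continuousOn_const
    refine ContinuousOn.div continuousOn_const ?_ ?_
    · fun_prop
    · intro q hq
      exact (hden k q hq.1).ne'
  have hTcont : ContinuousOn T (Set.Icc 0 B) := by
    rw [hT]
    show ContinuousOn (fun q => (q + Δ * (Λstar q - S * μ)) ⊔ 0) _
    exact ((continuous_id.continuousOn.add
      (continuousOn_const.mul (hΛcont.sub continuousOn_const))).sup continuousOn_const)
  -- T maps [0,B] into itself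
  have hTmaps : ∀ q : ℝ, q ∈ Set.Icc (0:ℝ) B → T q ∈ Set.Icc (0:ℝ) B := by
    intro q hq
    refine ⟨le_max_right _ _, ?_⟩
    rcases le_or_gt q Qdrop with h | h
    · have h1 : Λstar q ≤ Λmax := hΛleMax q hq.1
      have h2 : q + Δ * (Λstar q - S * μ) ≤ B := by
        have hsμ : 0 < S * μ + ε := hc
        have : Δ * (Λstar q - S * μ) ≤ Δ * Λmax := by
          apply mul_le_mul_of_nonneg_left _ hΔ.le
          nlinarith
        rw [hBdef]; linarith
      exact max_le h2 hB0
    · have h1 : Λstar q = Λ0 := hΛdrop q h.le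
      have h2 : q + Δ * (Λstar q - S * μ) ≤ q := by
        rw [h1]
        nlinarith
      exact max_le (h2.trans hq.2) hB0
  -- T is monotone on [0,B]
  have hTmono : ∀ q1 q2 : ℝ, q1 ∈ Set.Icc (0:ℝ) B → q2 ∈ Set.Icc (0:ℝ) B → q1 ≤ q2 →
      T q1 ≤ T q2 := by
    intro q1 q2 h1 h2 h12
    apply max_le_max _ le_rfl
    have hlip := hLip q1 q2 h1 h2
    have habs : Λstar q1 - Λstar q2 ≤ L * (q2 - q1) := by
      have h3 : |q1 - q2| = q2 - q1 := by
        rw [abs_sub_comm]; exact abs_of_nonneg (by linarith)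
      calc Λstar q1 - Λstar q2 ≤ |Λstar q1 - Λstar q2| := le_abs_self _
        _ ≤ L * |q1 - q2| := hlip
        _ = L * (q2 - q1) := by rw [h3]
    have hkey : Δ * (Λstar q1 - Λstar q2) ≤ q2 - q1 := by
      have h4 : Δ * (Λstar q1 - Λstar q2) ≤ Δ * (L * (q2 - q1)) :=
        mul_le_mul_of_nonneg_left habs hΔ.le
      have h5 : Δ * (L * (q2 - q1)) = (Δ * L) * (q2 - q1) := by ring
      have h6 : (Δ * L) * (q2 - q1) ≤ 1 * (q2 - q1) :=
        mul_le_mul_of_nonneg_right hstep (by linarith)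
      linarith
    linarith
  -- existence of a fixed point via IVT
  have hTB : T B ≤ B := by
    have h1 : Λstar B = Λ0 := hΛdrop B hQdB
    have h2 : B + Δ * (Λstar B - S * μ) ≤ B := by rw [h1]; nlinarith
    exact max_le h2 hB0
  have hT0 : 0 ≤ T 0 := le_max_right _ _
  obtain ⟨qs, hqsmem, hqsfix⟩ : ∃ qs ∈ Set.Icc (0:ℝ) B, T qs = qs := by
    have hgc : ContinuousOn (fun q => T q - q) (Set.Icc 0 B) :=
      hTcont.sub continuous_id.continuousOn
    have hivt := intermediate_value_Icc' hB0 hgc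
    have h0mem : (0:ℝ) ∈ Set.Icc (T B - B) (T 0 - 0) :=
      Set.mem_Icc.mpr ⟨by linarith, by linarith⟩
    obtain ⟨qs, hqs, hval⟩ := hivt h0mem
    simp only [] at hval
    exact ⟨qs, hqs, by linarith⟩
  -- fixed point characterization
  have hfixgt : ∀ q : ℝ, 0 < q → T q = q → Λstar q = S * μ := by
    intro q hq hfix
    have hfix' : max (q + Δ * (Λstar q - S * μ)) 0 = q := hfix
    have h1 : q + Δ * (Λstar q - S * μ) = q := by
      rcases max_cases (q + Δ * (Λstar q - S * μ)) 0 with ⟨h, _⟩ | ⟨h, _⟩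
      · rw [h] at hfix'; exact hfix'
      · exfalso; rw [h] at hfix'; exact absurd hfix' (ne_of_lt hq)
    have h2 : Δ * (Λstar q - S * μ) = 0 := by linarith
    have h3 : Λstar q - S * μ = 0 := by
      rcases mul_eq_zero.mp h2 with h | h
      · exact absurd h (ne_of_gt hΔ)
      · exact h
    linarith
  have hfix0' : T 0 = 0 → Λstar 0 ≤ S * μ := by
    intro h
    have h' : max (0 + Δ * (Λstar 0 - S * μ)) 0 = 0 := h
    have h2 : 0 + Δ * (Λstar 0 - S * μ) ≤ 0 := by
      by_contra hcon; push_neg at hcon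
      rw [max_eq_left hcon.le] at h'; linarith
    nlinarith
  -- uniqueness of the fixed point
  have huniq0 : ∀ a b : ℝ, 0 ≤ a → a < b → T a = a → T b = b → False := by
    intro a b ha hab hfa hfb
    have hb : 0 < b := lt_of_le_of_lt ha hab
    have hΛb : Λstar b = S * μ := hfixgt b hb hfb
    have h1 : Λ0 < Λstar b := by rw [hΛb]; exact hguard
    have h2 : Λstar b < Λstar a := hstrict a b ha hab h1
    rcases eq_or_lt_of_le ha with h | h
    · subst h
      have := hfix0' hfa
      linarith
    · have := hfixgt a h hfa
      linarith
  have huniq : ∀ q : ℝ, 0 ≤ q → T q = q → q = qs := by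
    intro q hq hfix
    rcases lt_trichotomy q qs with h | h | h
    · exact (huniq0 q qs hq h hfix hqsfix).elim
    · exact h
    · exact (huniq0 qs q hqsmem.1 h hqsfix hfix).elim
  -- drift sign lemmas
  have hup : ∀ q : ℝ, qs ≤ q → Λstar q ≤ S * μ := by
    intro q hq
    rcases eq_or_lt_of_le hqsmem.1 with h | h
    · have h0 : Λstar 0 ≤ S * μ := hfix0' (by rw [h]; exact hqsfix)
      have := hmono 0 q le_rfl (by linarith)
      linarith
    · have hΛq : Λstar qs = S * μ := hfixgt qs h hqsfix
      have := hmono qs q h.le hq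
      linarith
  have hTge : ∀ q : ℝ, 0 ≤ q → q ≤ qs → q ≤ T q := by
    intro q hq hle
    rcases eq_or_lt_of_le hle with h | h
    · rw [h, hqsfix]
    · have hqs : 0 < qs := lt_of_le_of_lt hq h
      have hΛqs : Λstar qs = S * μ := hfixgt qs hqs hqsfix
      have h2 : S * μ ≤ Λstar q := by
        have := hmono q qs hq h.le; linarith
      have h3 : q ≤ q + Δ * (Λstar q - S * μ) := by nlinarith
      exact le_trans h3 (le_max_left _ _)
  have hTle : ∀ q : ℝ, 0 ≤ q → qs ≤ q → T q ≤ q := by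
    intro q hq hge
    have h1 : Λstar q ≤ S * μ := hup q hge
    have h2 : q + Δ * (Λstar q - S * μ) ≤ q := by nlinarith
    exact max_le h2 hq
  -- the limit of an in-region trajectory is a fixed point
  have hlimfix : ∀ (R : ℕ → ℝ) (l : ℝ), (∀ t, R t ∈ Set.Icc (0:ℝ) B) →
      (∀ t, R (t + 1) = T (R t)) → Tendsto R atTop (nhds l) → T l = l := by
    intro R l hmem hrec hconv
    have hlmem : l ∈ Set.Icc (0:ℝ) B :=
      isClosed_Icc.mem_of_tendsto hconv (Filter.Eventually.of_forall hmem)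
    have hnw : Tendsto R atTop (nhdsWithin l (Set.Icc 0 B)) :=
      tendsto_nhdsWithin_iff.mpr ⟨hconv, Filter.Eventually.of_forall hmem⟩
    have h1 : Tendsto (fun t => T (R t)) atTop (nhds (T l)) :=
      (hTcont l hlmem).tendsto.comp hnw
    have h2 : Tendsto (fun t => R (t + 1)) atTop (nhds l) :=
      hconv.comp (tendsto_add_atTop_nat 1)
    have h3 : Tendsto (fun t => R (t + 1)) atTop (nhds (T l)) := by
      simp only [hrec]; exact h1
    exact tendsto_nhds_unique h3 h2
  -- convergence from inside the region
  have hcore : ∀ (R : ℕ → ℝ), R 0 ∈ Set.Icc (0:ℝ) B → (∀ t, R (t + 1) = T (R t)) →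
      Tendsto R atTop (nhds qs) := by
    intro R h0 hrec
    have hmem : ∀ t, R t ∈ Set.Icc (0:ℝ) B := by
      intro t; induction t with
      | zero => exact h0
      | succ n ih => rw [hrec n]; exact hTmaps _ ih
    rcases le_total (R 0) qs with hcase | hcase
    · have hband : ∀ t, R t ≤ qs := by
        intro t; induction t with
        | zero => exact hcase
        | succ n ih =>
          rw [hrec n]
          calc T (R n) ≤ T qs := hTmono _ _ (hmem n) hqsmem ih
            _ = qs := hqsfix
      have hmr : Monotone R := by
        apply monotone_nat_of_le_succ
        intro n
        rw [hrec n]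
        exact hTge (R n) (hmem n).1 (hband n)
      have hbdd : BddAbove (Set.range R) := ⟨qs, by rintro x ⟨t, rfl⟩; exact hband t⟩
      have hconv := tendsto_atTop_ciSup hmr hbdd
      have hfixl := hlimfix R _ hmem hrec hconv
      have hl0 : 0 ≤ ⨆ t, R t := le_trans (hmem 0).1 (le_ciSup hbdd 0)
      have heq := huniq _ hl0 hfixl
      rwa [heq] at hconv
    · have hband : ∀ t, qs ≤ R t := by
        intro t; induction t with
        | zero => exact hcase
        | succ n ih =>
          rw [hrec n]
          calc qs = T qs := hqsfix.symm
            _ ≤ T (R n) := hTmono _ _ hqsmem (hmem n) ih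
      have hmr : Antitone R := by
        apply antitone_nat_of_succ_le
        intro n
        rw [hrec n]
        exact hTle (R n) (hmem n).1 (hband n)
      have hbdd : BddBelow (Set.range R) := ⟨qs, by rintro x ⟨t, rfl⟩; exact hband t⟩
      have hconv := tendsto_atTop_ciInf hmr hbdd
      have hfixl := hlimfix R _ hmem hrec hconv
      have hl0 : 0 ≤ ⨅ t, R t := le_trans hqsmem.1 (le_ciInf hband)
      have heq := huniq _ hl0 hfixl
      rwa [heq] at hconv
  refine ⟨qs, hqsmem.1, hqsfix, huniq, ?_⟩
  intro Q hQ0 hrec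
  have hrec' : ∀ t, Q (t + 1) = T (Q t) := hrec
  have hQnn : ∀ t, 0 ≤ Q t := by
    intro t; cases t with
    | zero => exact hQ0
    | succ n => rw [hrec' n]; exact le_max_right _ _
  have henter : ∃ t0, Q t0 ≤ B := by
    by_contra hcon
    push_neg at hcon
    set c0 : ℝ := Δ * (S * μ - Λ0) with hc0
    have hc0pos : 0 < c0 := by rw [hc0]; nlinarith
    have hdec : ∀ n : ℕ, Q n ≤ Q 0 - n * c0 := by
      intro n; induction n with
      | zero => simp
      | succ m ih =>
        have hQm : Qdrop ≤ Q m := le_trans hQdB (hcon m).le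
        have hΛm : Λstar (Q m) = Λ0 := hΛdrop _ hQm
        have hpos : 0 < Q (m + 1) := lt_of_le_of_lt hB0 (hcon (m + 1))
        have h1 : Q (m + 1) = max (Q m + Δ * (Λ0 - S * μ)) 0 := by
          rw [hrec' m]; simp only [hT, hΛm]
        have heq : Q (m + 1) = Q m + Δ * (Λ0 - S * μ) := by
          rcases max_cases (Q m + Δ * (Λ0 - S * μ)) 0 with ⟨h, _⟩ | ⟨h, _⟩
          · rw [h1, h]
          · exfalso; rw [h1, h] at hpos; exact lt_irrefl 0 hpos
        have h2 : Q m + Δ * (Λ0 - S * μ) = Q m - c0 := by rw [hc0]; ring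
        push_cast
        rw [heq, h2]
        linarith
    obtain ⟨n, hn⟩ := exists_nat_gt ((Q 0 - B) / c0)
    have h2 : Q 0 - B < n * c0 := by
      rw [div_lt_iff₀ hc0pos] at hn; linarith
    have h3 := hdec n
    have h4 := hcon n
    linarith
  obtain ⟨t0, ht0⟩ := henter
  have hcoreQ := hcore (fun t => Q (t + t0))
    (Set.mem_Icc.mpr ⟨by simpa using hQnn t0, by simpa using ht0⟩)
    (fun t => by
      have h5 : t + t0 + 1 = t + 1 + t0 := by omega
      rw [← h5, hrec' (t + t0)])
  exact (tendsto_add_atTop_iff_nat t0).mp hcoreQ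
end

section
/- Under the guardrail ε(P,S) := Sμ − Λ_0(P) > 0, any trajectory of Q_{t+1} = max{Q_t + Δ(Λ*_{P,S}(Q_t) − Sμ), 0} starting at Q_0 ≥ Q^drop(P,S) satisfies Q_t ≤ max{Q_0 − t·Δ·ε(P,S), Q^drop(P,S) + Δ·Λ_max(P)} for all t ≥ 0 until first entering [0, Q^drop(P,S)]; in particular the first entry time into [0, Q^drop(P,S)] is at most ⌈(Q_0 − Q^drop(P,S))/(Δ·ε(P,S))⌉. -/
open Finset

/-- Quantified finite-time entry into the absorbing region: under the guardrail
`ε(P,S) = Sμ − Λ₀(P) > 0`, a trajectory starting at `Q₀ ≥ Q^drop` decreases linearly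
(up to the bound `Q^drop + Δ·Λ_max`) before first entering `[0, Q^drop]`, and the first
entry time is at most `⌈(Q₀ − Q^drop)/(Δ·ε(P,S))⌉`. -/
theorem stmt_17 (K : ℕ) (ρ w δ : Fin K → ℝ)
    (hρ : ∀ k, 0 ≤ ρ k) (hw : ∀ k, 0 < w k) (hδ : ∀ k, 0 ≤ δ k)
    (P S μ ε Δ : ℝ) (hP : 0 < P) (hS : 0 ≤ S) (hμ : 0 < μ) (hε : 0 < ε) (hΔ : 0 < Δ)
    (hne : (Finset.univ.filter (fun k => 0 < δ k)).Nonempty)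
    (Λstar : ℝ → ℝ) (Λ0 Λmax Qdrop : ℝ)
    (hΛ : ∀ Q, Λstar Q = ∑ k, ρ k * max (w k / (P + δ k * (Q / (S * μ + ε))) - 1) 0)
    (hΛ0 : Λ0 = ∑ k, if δ k = 0 then ρ k * max (w k / P - 1) 0 else 0)
    (hΛmax : Λmax = ∑ k, ρ k * max (w k / P - 1) 0)
    (hQdrop : Qdrop = (Finset.univ.filter (fun k => 0 < δ k)).sup' hne
      (fun k => max ((S * μ + ε) * (w k - P) / δ k) 0))
    (hguard : 0 < S * μ - Λ0)
    (Q : ℕ → ℝ) (hQ0 : Qdrop ≤ Q 0)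
    (hrec : ∀ t, Q (t + 1) = max (Q t + Δ * (Λstar (Q t) - S * μ)) 0) :
    (∀ t : ℕ, (∀ s ≤ t, Qdrop < Q s) →
      Q t ≤ max (Q 0 - (t : ℝ) * Δ * (S * μ - Λ0)) (Qdrop + Δ * Λmax)) ∧
    (∃ T : ℕ, T ≤ ⌈(Q 0 - Qdrop) / (Δ * (S * μ - Λ0))⌉₊ ∧ Q T ≤ Qdrop) := by

  have hc : (0:ℝ) < S * μ + ε := add_pos_of_nonneg_of_pos (mul_nonneg hS hμ.le) hε
  have hQdrop0 : 0 ≤ Qdrop := by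
    obtain ⟨k, hk⟩ := hne
    have h := Finset.le_sup' (fun k => max ((S * μ + ε) * (w k - P) / δ k) 0) hk
    rw [hQdrop]
    exact le_trans (le_max_right _ _) h
  have hΛeq : ∀ x, Qdrop ≤ x → Λstar x = Λ0 := by
    intro x hx
    rw [hΛ, hΛ0]
    apply Finset.sum_congr rfl
    intro k _
    by_cases hk : δ k = 0
    · simp [hk]
    · have hkpos : 0 < δ k := lt_of_le_of_ne (hδ k) (Ne.symm hk)
      have hmem : k ∈ Finset.univ.filter (fun k => 0 < δ k) := by simp [hkpos]
      have hle : (S * μ + ε) * (w k - P) / δ k ≤ Qdrop := by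
        rw [hQdrop]
        have h5 := Finset.le_sup' (fun k => max ((S * μ + ε) * (w k - P) / δ k) 0) hmem
        exact le_trans (le_max_left _ _) h5
      have hx0 : 0 ≤ x := le_trans hQdrop0 hx
      have hden : 0 < P + δ k * (x / (S * μ + ε)) := by positivity
      have hwle : w k ≤ P + δ k * (x / (S * μ + ε)) := by
        have h1 : (S * μ + ε) * (w k - P) / δ k ≤ x := le_trans hle hx
        have h2 : (S * μ + ε) * (w k - P) ≤ δ k * x := by
          rw [div_le_iff₀ hkpos] at h1; nlinarith
        have h3 : w k - P ≤ δ k * x / (S * μ + ε) := by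
          rw [le_div_iff₀ hc]; nlinarith
        have h4 : δ k * x / (S * μ + ε) = δ k * (x / (S * μ + ε)) := by ring
        linarith [h4 ▸ h3]
      have hle1 : w k / (P + δ k * (x / (S * μ + ε))) - 1 ≤ 0 := by
        have := div_le_one_of_le₀ hwle hden.le
        linarith
      simp [hk, max_eq_right hle1]
  set e := S * μ - Λ0 with he
  have hde : 0 < Δ * e := mul_pos hΔ hguard
  have hstep : ∀ t, Qdrop ≤ Q t → Q (t+1) = max (Q t - Δ * e) 0 := by
    intro t ht
    rw [hrec t, hΛeq _ ht]
    congr 1; rw [he]; ring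
  have part1 : ∀ t : ℕ, (∀ s ≤ t, Qdrop < Q s) →
      Q t ≤ max (Q 0 - (t:ℝ) * Δ * e) (Qdrop + Δ * Λmax) := by
    intro t
    induction t with
    | zero => intro _; simp
    | succ n ih =>
      intro h
      have hn : ∀ s ≤ n, Qdrop < Q s := fun s hs => h s (hs.trans n.le_succ)
      have hQn := hn n le_rfl
      have hQn1 := h (n+1) le_rfl
      have hstep' := hstep n hQn.le
      have hpos : 0 < Q (n+1) := lt_of_le_of_lt hQdrop0 hQn1
      have heq : Q (n+1) = Q n - Δ * e := by
        rcases max_cases (Q n - Δ * e) 0 with ⟨h1, _⟩ | ⟨h1, _⟩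
        · rw [hstep', h1]
        · rw [hstep', h1] at hpos; linarith
      have hih := ih hn
      rw [heq]
      rcases le_max_iff.mp hih with h' | h'
      · apply le_max_of_le_left; push_cast; linarith
      · apply le_max_of_le_right; linarith
  refine ⟨part1, ?_⟩
  by_cases hex : ∃ s ≤ ⌈(Q 0 - Qdrop) / (Δ * e)⌉₊, Q s ≤ Qdrop
  · obtain ⟨s, hs1, hs2⟩ := hex; exact ⟨s, hs1, hs2⟩
  · push_neg at hex
    set N := ⌈(Q 0 - Qdrop) / (Δ * e)⌉₊ with hN
    exfalso
    have hlin : ∀ s ≤ N, Q s = Q 0 - (s:ℝ) * (Δ * e) := by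
      intro s
      induction s with
      | zero => intro _; simp
      | succ n ih =>
        intro hsn
        have hn : n ≤ N := le_of_lt (Nat.lt_of_succ_le hsn)
        have h1 := ih hn
        have h2 := hstep n (le_of_lt (hex n hn))
        have hpos := hex (n+1) hsn
        have heq : Q (n+1) = Q n - Δ * e := by
          rcases max_cases (Q n - Δ * e) 0 with ⟨ha, _⟩ | ⟨ha, _⟩
          · rw [h2, ha]
          · exfalso; rw [h2, ha] at hpos; linarith
        rw [heq, h1]; push_cast; ring
    have hNle : (Q 0 - Qdrop) / (Δ * e) ≤ (N:ℝ) := Nat.le_ceil _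
    have hmul : Q 0 - Qdrop ≤ (N:ℝ) * (Δ * e) := by
      rw [div_le_iff₀ hde] at hNle; linarith
    have hQN := hlin N le_rfl
    have hle2 : Q N ≤ Qdrop := by rw [hQN]; linarith
    exact absurd hle2 (not_le.mpr (hex N le_rfl))
end
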